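/- Let R be a finite reduced crystallographic root system spanning a finite-dimensional real vector space V, with base Π and Weyl group W, and let γ ∈ V satisfy ⟨γ, α∨⟩ ∈ ℤ_{>0} for every α ∈ Π. For w ∈ W, write γ − wγ = Σ_{α ∈ Π} c_α(w)·α with coefficients c_α(w) ∈ ℤ_{≥0}. Then for every w ∈ W and every α ∈ Π, either c_α(w) = 0 or c_α(w) ≥ ⟨γ, α∨⟩. -/

import Mathlib

/-- A root system: a root pairing whose roots span the ambient module (the older Mathlib
definition of `RootSystem`, which is no longer in Mathlib). -/
structure RootSystem (ι R M N : Type*) [CommRing R] [AddCommGroup M] [Module R M]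
    [AddCommGroup N] [Module R N] extends RootPairing ι R M N where
  span_eq_top : Submodule.span R (Set.range toRootPairing.root) = ⊤

/-- A base of a root system: a linearly independent subset of the roots such that every root
is either a nonnegative or a nonpositive integer linear combination of its elements. -/
def RootSystem.IsBaseSet {ι V N : Type*} [AddCommGroup V] [Module ℝ V]
    [AddCommGroup N] [Module ℝ N] (P : RootSystem ι ℝ V N) (b : Finset ι) : Prop :=
  (LinearIndependent ℝ fun j : b => P.root j) ∧
    ∀ i : ι, ∃ c : ι → ℤ, ((∀ j ∈ b, 0 ≤ c j) ∨ (∀ j ∈ b, c j ≤ 0)) ∧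
      P.root i = ∑ j ∈ b, c j • P.root j

/-!
Write `w` as a word `s_{i₁} ⋯ s_{iₙ}` in the simple reflections and induct on its length. For
`w = s_i w'` one has `γ - w γ = (γ - w' γ) + ⟨w' γ, α_i∨⟩ α_i`, so only the coefficient of `α_i`
changes. If `w'⁻¹ α_i` is a positive root, the increment `⟨γ, (w'⁻¹ α_i)∨⟩` is nonnegative since `γ`
is dominant; and if the old coefficient of `α_i` was zero, the increment equals
`⟨γ, α_i∨⟩ - Σ_{j ≠ i} c_j ⟨α_j, α_i∨⟩ ≥ ⟨γ, α_i∨⟩`, because distinct simple roots pair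
nonpositively. If `w'⁻¹ α_i` is negative, the deletion condition gives a shorter word for `w`.
-/

namespace RootPairing

variable {ι R M N : Type*} [AddCommGroup M] [AddCommGroup N]

section CommRing

variable [CommRing R] [Module R M] [Module R N] (P : RootPairing ι R M N)

lemma exists_list_of_mem_closure_reflection {s : Set ι} {w : M ≃ₗ[R] M}
    (hw : w ∈ Subgroup.closure {x | ∃ i ∈ s, x = P.reflection i}) :
    ∃ L : List ι, (∀ l ∈ L, l ∈ s) ∧ (L.map P.reflection).prod = w := by
  induction hw using Subgroup.closure_induction_left with
  | one => exact ⟨[], by simp, rfl⟩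
  | mul_left x hx y _ ih | inv_mul_cancel x hx y _ ih =>
    obtain ⟨i, hi, rfl⟩ := hx
    obtain ⟨L, hL, rfl⟩ := ih
    exact ⟨i :: L, List.forall_mem_cons.2 ⟨hi, hL⟩, by simp⟩

lemma coroot'_list_prod_reflection (L : List ι) (k : ι) (x : M) :
    P.coroot' k ((L.map P.reflection).prod x) =
      P.coroot' ((L.reverse.map P.reflectionPerm).prod k) x := by
  induction L generalizing k with
  | nil => rfl
  | cons l L ih =>
    simp only [List.map_cons, List.prod_cons, LinearEquiv.mul_apply, coroot'_reflection, ih,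
      List.reverse_cons, List.map_append, List.prod_append, List.map_nil, List.prod_nil,
      Equiv.Perm.mul_apply, Equiv.Perm.one_apply]

lemma rootForm_root_self_mul_toLinearMap_coroot [Fintype ι] (k : ι) (x : M) :
    P.RootForm (P.root k) (P.root k) * P.toLinearMap x (P.coroot k) =
      2 * P.RootForm (P.root k) x := by
  have h := congr(P.toLinearMap x $(P.rootForm_self_smul_coroot k))
  rwa [map_smul, map_nsmul, toLinearMap_apply_apply_Polarization, smul_eq_mul, nsmul_eq_mul,
    Nat.cast_ofNat] at h

end CommRing

namespace Base

variable [Field R] [LinearOrder R] [IsStrictOrderedRing R] [Module R M] [Module R N]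
  {P : RootPairing ι R M N}

def CoeffsZeroOrGe (b : P.Base) (x v : M) : Prop :=
  ∃ d : ι → R, v = ∑ j ∈ b.support, d j • P.root j ∧
    ∀ j ∈ b.support, 0 ≤ d j ∧ (d j = 0 ∨ P.toLinearMap x (P.coroot j) ≤ d j)

variable [Fintype ι] [P.IsCrystallographic] {b : P.Base} {x : M}

lemma pairing_nonpos_of_ne {i j : ι} (hij : i ≠ j) (hi : i ∈ b.support) (hj : j ∈ b.support) :
    P.pairing i j ≤ 0 := by
  rw [← P.algebraMap_pairingIn ℤ, algebraMap_int_eq, eq_intCast]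
  exact_mod_cast b.pairingIn_le_zero_of_ne hij hi hj

lemma rootForm_root_nonneg_of_isPos (hx : ∀ j ∈ b.support, 0 ≤ P.toLinearMap x (P.coroot j))
    {k : ι} (hk : b.IsPos k) :
    0 ≤ P.RootForm (P.root k) x := by
  have simple (j : ι) (hj : j ∈ b.support) : 0 ≤ P.RootForm (P.root j) x := by
    have := P.rootForm_root_self_mul_toLinearMap_coroot j x
    have := mul_nonneg (P.zero_le_rootForm (P.root j)) (hx j hj)
    linarith
  refine hk.induction_on_add (p := fun k ↦ 0 ≤ P.RootForm (P.root k) x) simple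
    fun i j k hk hi hj ↦ ?_
  rw [hk, map_add, LinearMap.add_apply]
  exact add_nonneg hi (simple j hj)

lemma toLinearMap_coroot_nonneg_of_isPos (hx : ∀ j ∈ b.support, 0 ≤ P.toLinearMap x (P.coroot j))
    {k : ι} (hk : b.IsPos k) :
    0 ≤ P.toLinearMap x (P.coroot k) := by
  have hform : 0 < P.RootForm (P.root k) (P.root k) :=
    (P.zero_le_rootForm _).lt_of_ne' (IsAnisotropic.rootForm_root_ne_zero k)
  have := P.rootForm_root_self_mul_toLinearMap_coroot k x
  have := rootForm_root_nonneg_of_isPos hx hk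
  exact nonneg_of_mul_nonneg_right (by linarith) hform

lemma exists_shorter_list_of_not_isPos [P.IsReduced] (L : List ι)
    (hL : ∀ l ∈ L, l ∈ b.support) {k : ι} (hk : b.IsPos k)
    (hk' : ¬ b.IsPos ((L.reverse.map P.reflectionPerm).prod k)) :
    ∃ L' : List ι, (∀ l ∈ L', l ∈ b.support) ∧ L'.length < L.length ∧
      (L'.map P.reflection).prod = P.reflection k * (L.map P.reflection).prod := by
  induction L generalizing k with
  | nil => simp_all
  | cons l L ih =>
    obtain ⟨hl, hLtail⟩ := List.forall_mem_cons.1 hL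
    by_cases hkl : k = l
    · subst hkl
      exact ⟨L, hLtail, by simp, by simp [← mul_assoc, ← sq]⟩
    · obtain ⟨L', hL', hlen, hprod⟩ :=
        ih hLtail (hk.reflectionPerm hl hkl) (by simpa [Equiv.Perm.mul_apply] using hk')
      refine ⟨l :: L', List.forall_mem_cons.2 ⟨hl, hL'⟩, by simpa, ?_⟩
      simp only [List.map_cons, List.prod_cons, hprod, reflection_reflectionPerm, ← mul_assoc]
      simp [mul_assoc, ← sq]

lemma toLinearMap_sum_smul_root_coroot_nonpos {d : ι → R} (hd : ∀ j ∈ b.support, 0 ≤ d j)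
    {i : ι} (hi : i ∈ b.support) (hdi : d i = 0) :
    P.toLinearMap (∑ j ∈ b.support, d j • P.root j) (P.coroot i) ≤ 0 := by
  simp only [map_sum, map_smul, LinearMap.sum_apply, LinearMap.smul_apply,
    root_coroot_eq_pairing, smul_eq_mul]
  refine Finset.sum_nonpos fun j hj ↦ ?_
  obtain rfl | hji := eq_or_ne j i
  · simp [hdi]
  · exact mul_nonpos_of_nonneg_of_nonpos (hd j hj) (b.pairing_nonpos_of_ne hji hj hi)

lemma CoeffsZeroOrGe.sub_reflection {y : M} (h : b.CoeffsZeroOrGe x (x - y)) {i : ι}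
    (hi : i ∈ b.support) (ht : 0 ≤ P.coroot' i y) :
    b.CoeffsZeroOrGe x (x - P.reflection i y) := by
  classical
  obtain ⟨d, hd, hd'⟩ := h
  refine ⟨d + Pi.single i (P.coroot' i y), ?_, fun j hj ↦ ?_⟩
  · rw [reflection_apply, sub_sub_eq_add_sub, add_sub_right_comm, hd]
    simp [add_smul, Finset.sum_add_distrib, Pi.single_apply, hi]
  obtain rfl | hji := eq_or_ne j i
  · obtain ⟨hd0, hdj | hdj⟩ := hd' j hj
    · have hle : P.toLinearMap x (P.coroot j) - P.coroot' j y ≤ 0 := by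
        have := toLinearMap_sum_smul_root_coroot_nonpos (fun j hj ↦ (hd' j hj).1) hj hdj
        rwa [← hd, map_sub, LinearMap.sub_apply] at this
      simp only [Pi.add_apply, Pi.single_eq_same, hdj, zero_add]
      exact ⟨ht, .inr (by linarith)⟩
    · simp only [Pi.add_apply, Pi.single_eq_same]
      exact ⟨add_nonneg hd0 ht, .inr (by linarith)⟩
  · simpa [hji] using hd' j hj

lemma coeffsZeroOrGe_sub_list_prod_reflection [P.IsReduced]
    (hx : ∀ j ∈ b.support, 0 ≤ P.toLinearMap x (P.coroot j)) (L : List ι)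
    (hL : ∀ l ∈ L, l ∈ b.support) :
    b.CoeffsZeroOrGe x (x - (L.map P.reflection).prod x) := by
  induction h : L.length using Nat.strong_induction_on generalizing L with
  | _ n ih =>
    rcases L with _ | ⟨i, L⟩
    · exact ⟨0, by simp, by simp⟩
    obtain ⟨hi, hL⟩ := List.forall_mem_cons.1 hL
    rw [List.map_cons, List.prod_cons]
    by_cases hpos : b.IsPos ((L.reverse.map P.reflectionPerm).prod i)
    · refine (ih L.length (by simp [← h]) L hL rfl).sub_reflection hi ?_
      rw [coroot'_list_prod_reflection]
      exact toLinearMap_coroot_nonneg_of_isPos hx hpos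
    · obtain ⟨L', hL', hlen, hprod⟩ :=
        exists_shorter_list_of_not_isPos L hL (isPos_of_mem_support hi) hpos
      rw [← hprod]
      exact ih L'.length (by simp only [List.length_cons] at h; omega) L' hL' rfl

end Base

end RootPairing

lemma AddSubmonoid.sum_zsmul_mem_closure {ι M : Type*} [AddCommGroup M] {s : Finset ι}
    {v : ι → M} {c : ι → ℤ} (hc : ∀ j ∈ s, 0 ≤ c j) :
    ∑ j ∈ s, c j • v j ∈ AddSubmonoid.closure (v '' s) :=
  AddSubmonoid.sum_mem _ fun j hj ↦ by
    rw [← Int.toNat_of_nonneg (hc j hj), natCast_zsmul]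
    exact AddSubmonoid.nsmul_mem _ (AddSubmonoid.subset_closure (Set.mem_image_of_mem v hj)) _

namespace RootSystem

variable {ι R V N : Type*} [Fintype ι] [AddCommGroup V] [AddCommGroup N]

instance [Field R] [LinearOrder R] [IsStrictOrderedRing R] [Module R V] [Module R N]
    (P : RootSystem ι R V N) : P.IsRootSystem where
  span_root_eq_top := P.span_eq_top
  span_coroot_eq_top := P.rootSpan_eq_top_iff.1 P.span_eq_top

lemma IsBaseSet.exists_base [Module ℝ V] [Module ℝ N] {P : RootSystem ι ℝ V N}
    [P.IsCrystallographic] [P.IsReduced] {b : Finset ι} (hb : P.IsBaseSet b) :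
    ∃ B : P.Base, B.support = b := by
  refine ⟨RootPairing.Base.mk' P.toRootPairing b hb.1 fun i ↦ ?_, by simp [RootPairing.Base.mk']⟩
  obtain ⟨c, hc | hc, hci⟩ := hb.2 i
  · exact .inl (hci ▸ AddSubmonoid.sum_zsmul_mem_closure hc)
  · refine .inr ?_
    rw [hci, ← Finset.sum_neg_distrib]
    simp_rw [← neg_zsmul]
    exact AddSubmonoid.sum_zsmul_mem_closure fun j hj ↦ neg_nonneg.2 (hc j hj)

end RootSystem

theorem coeff_eq_zero_or_ge_pairing_general
    {ι V N : Type*} [Fintype ι] [AddCommGroup V] [Module ℝ V]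
    [AddCommGroup N] [Module ℝ N]
    (P : RootSystem ι ℝ V N) (hcrys : P.IsCrystallographic) (hred : P.IsReduced)
    (b : Finset ι) (hb : P.IsBaseSet b)
    (γ : V) (hγ : ∀ j ∈ b, ∃ z : ℤ, 0 < z ∧ (z : ℝ) = P.toLinearMap γ (P.coroot j))
    (w : V ≃ₗ[ℝ] V)
    (hw : w ∈ Subgroup.closure {x : V ≃ₗ[ℝ] V | ∃ i ∈ b, x = P.reflection i})
    (c : ι → ℕ) (hc : γ - w γ = ∑ j ∈ b, (c j : ℝ) • P.root j) :
    ∀ j ∈ b, c j = 0 ∨ P.toLinearMap γ (P.coroot j) ≤ (c j : ℝ) := by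
  obtain ⟨B, rfl⟩ := hb.exists_base
  obtain ⟨L, hL, rfl⟩ := P.exists_list_of_mem_closure_reflection hw
  have hdom (j : ι) (hj : j ∈ B.support) : 0 ≤ P.toLinearMap γ (P.coroot j) := by
    obtain ⟨z, hz, hzγ⟩ := hγ j hj
    exact hzγ ▸ mod_cast hz.le
  obtain ⟨d, hd, hd'⟩ := B.coeffsZeroOrGe_sub_list_prod_reflection hdom L hL
  intro j hj
  have hcd : (c j : ℝ) = d j :=
    linearIndepOn_finset_iffₛ.1 B.linearIndepOn_root _ d (hc ▸ hd) j hj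
  rcases (hd' j hj).2 with h | h
  · exact .inl (mod_cast hcd.trans h)
  · exact .inr (hcd ▸ h)

/-- **Nonzero coefficients of `γ − wγ` are at least `⟨γ, α∨⟩`.**
For `γ` with `⟨γ, α∨⟩ ∈ ℤ_{>0}` for all simple `α`, and `w` in the Weyl group (the group
generated by the simple reflections), writing `γ − wγ = Σ_{α ∈ Π} c_α(w)·α`, each
coefficient `c_α(w)` is either `0` or at least `⟨γ, α∨⟩`. -/
theorem coeff_eq_zero_or_ge_pairing
    {ι V N : Type*} [Fintype ι] [DecidableEq ι] [AddCommGroup V] [Module ℝ V]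
    [FiniteDimensional ℝ V] [AddCommGroup N] [Module ℝ N]
    (P : RootSystem ι ℝ V N) (hcrys : P.IsCrystallographic) (hred : P.IsReduced)
    (b : Finset ι) (hb : P.IsBaseSet b)
    (γ : V) (hγ : ∀ j ∈ b, ∃ z : ℤ, 0 < z ∧ (z : ℝ) = P.toLinearMap γ (P.coroot j))
    (w : V ≃ₗ[ℝ] V)
    (hw : w ∈ Subgroup.closure {x : V ≃ₗ[ℝ] V | ∃ i ∈ b, x = P.reflection i})
    (c : ι → ℕ) (hc : γ - w γ = ∑ j ∈ b, (c j : ℝ) • P.root j) :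
    ∀ j ∈ b, c j = 0 ∨ P.toLinearMap γ (P.coroot j) ≤ (c j : ℝ) :=
  coeff_eq_zero_or_ge_pairing_general P hcrys hred b hb γ hγ w hw c hc
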